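/- Let M ∈ ℝ, c ∈ ℝ with c < 0, and assume 3(c − 1)² < 4M < (1 − 3c)(3 − c). Let H be the map H(x,y) = (x̄, ȳ) with x̄ = M + c·x − y², ȳ = (y + x̄² − M)/c. Then H has exactly two fixed points off the diagonal, namely the symmetric couple (u,v) and (v,u) with u + v = 1 − c, u·v = (1 − c)² − M, u ≠ v, and at each of them the Jacobian matrix of H has two non-real complex eigenvalues of modulus 1 (i.e. between the pitchfork curve PF and the curve PD(asym), the symmetric couple of fixed points of H is elliptic). -/

import Mathlib

/-!
`H` preserves area: its Jacobian has determinant `1` everywhere, so a fixed point is elliptic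
exactly when the trace of the Jacobian lies in `(-2, 2)`. Adding the two fixed-point equations
shows that a fixed point `(x, y)` off the diagonal has `x + y = 1 - c`, and then
`x * y = (1 - c)² - M`; when `3(c - 1)² < 4M` this quadratic has two distinct real roots `u, v`,
giving the couple `(u, v)`, `(v, u)`. There the trace is `c + (1 - 4uv)/c`, and `|trace| < 2`
is equivalent to the two inequalities on `4M`.
-/

/-- The map `H(x,y) = (x̄, ȳ)` with `x̄ = M + c·x − y²` and `ȳ = (y + x̄² − M)/c`,
the explicit form of the implicit system `x̄ = M + c·x − y²`, `c·ȳ = −M + y + x̄²`. -/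
noncomputable def Hmap (M c : ℝ) (p : ℝ × ℝ) : ℝ × ℝ :=
  (M + c * p.1 - p.2 ^ 2,
    (p.2 + (M + c * p.1 - p.2 ^ 2) ^ 2 - M) / c)

/-- The Jacobian matrix (2×2 real derivative matrix) of `Hmap M c` at the point
`(x,y)`, where `x̄ = M + c·x − y²`:
`[[c, −2y], [2x̄, (1 − 4x̄y)/c]]`. -/
noncomputable def HJac (M c : ℝ) (p : ℝ × ℝ) : Matrix (Fin 2) (Fin 2) ℝ :=
  !![c, -2 * p.2;
     2 * (M + c * p.1 - p.2 ^ 2), (1 - 4 * (M + c * p.1 - p.2 ^ 2) * p.2) / c]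

/-- `μ ∈ ℂ` is an eigenvalue of the real 2×2 matrix `A`
(eigenvalues of real matrices are taken over `ℂ`). -/
def hasEigenvalue (A : Matrix (Fin 2) (Fin 2) ℝ) (μ : ℂ) : Prop :=
  (A.map (fun t : ℝ => (t : ℂ)) - μ • 1).det = 0

theorem hasEigenvalue_iff (A : Matrix (Fin 2) (Fin 2) ℝ) (μ : ℂ) :
    hasEigenvalue A μ ↔ μ ^ 2 - (A.trace : ℂ) * μ + (A.det : ℂ) = 0 := by
  simp only [hasEigenvalue, Matrix.det_fin_two, Matrix.trace_fin_two, Matrix.sub_apply,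
    Matrix.map_apply, Matrix.smul_apply, Matrix.one_apply_eq, Matrix.one_apply_ne, ne_eq,
    Fin.zero_eq_one_iff, Fin.one_eq_zero_iff, OfNat.ofNat_ne_one, not_false_eq_true,
    smul_eq_mul, mul_one, mul_zero, sub_zero]
  push_cast
  constructor <;> intro h <;> linear_combination h

theorem Complex.im_ne_zero_and_norm_eq_one_of_sq_sub_mul_add_one_eq_zero {T : ℝ} (hT : T ^ 2 < 4)
    {μ : ℂ} (h : μ ^ 2 - T * μ + 1 = 0) : μ.im ≠ 0 ∧ ‖μ‖ = 1 := by
  have hre : μ.re ^ 2 - μ.im ^ 2 - T * μ.re + 1 = 0 := by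
    simpa [sq] using congrArg Complex.re h
  have him : μ.im * (2 * μ.re - T) = 0 := by
    linear_combination (by simpa [sq] using congrArg Complex.im h : _ = _)
  have him_ne : μ.im ≠ 0 := by
    intro h0
    rw [h0] at hre
    nlinarith [sq_nonneg (2 * μ.re - T)]
  have hT_eq : T = 2 * μ.re := by
    linarith [(mul_eq_zero.mp him).resolve_left him_ne]
  refine ⟨him_ne, ?_⟩
  have hnormSq : ‖μ‖ ^ 2 = 1 := by
    rw [Complex.sq_norm, Complex.normSq_apply]
    subst hT_eq
    linear_combination -hre
  exact (pow_eq_one_iff_of_nonneg (norm_nonneg μ) two_ne_zero).mp hnormSq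

theorem hasEigenvalue_im_ne_zero_and_norm_eq_one {A : Matrix (Fin 2) (Fin 2) ℝ}
    (hdet : A.det = 1) (htr : A.trace ^ 2 < 4) {μ : ℂ} (hμ : hasEigenvalue A μ) :
    μ.im ≠ 0 ∧ ‖μ‖ = 1 := by
  rw [hasEigenvalue_iff, hdet, Complex.ofReal_one] at hμ
  exact Complex.im_ne_zero_and_norm_eq_one_of_sq_sub_mul_add_one_eq_zero htr hμ

theorem HJac_det {c : ℝ} (hc : c ≠ 0) (M : ℝ) (p : ℝ × ℝ) : (HJac M c p).det = 1 := by
  rw [HJac, Matrix.det_fin_two_of]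
  field_simp
  ring

theorem HJac_trace (M c : ℝ) (p : ℝ × ℝ) :
    (HJac M c p).trace = c + (1 - 4 * (M + c * p.1 - p.2 ^ 2) * p.2) / c := by
  simp [HJac, Matrix.trace_fin_two]

theorem Hmap_eq_self_iff {c : ℝ} (hc : c ≠ 0) (M x y : ℝ) :
    Hmap M c (x, y) = (x, y) ↔ M + c * x - y ^ 2 = x ∧ y + x ^ 2 - M = c * y := by
  rw [Hmap, Prod.mk.injEq]
  refine and_congr_right fun hx => ?_
  rw [hx, div_eq_iff hc, mul_comm]

/-- Adding the two fixed-point equations gives `(x - y) * (x + y - (1 - c)) = 0`. -/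
theorem Hmap_eq_self_and_ne_iff {c : ℝ} (hc : c ≠ 0) (M x y : ℝ) :
    Hmap M c (x, y) = (x, y) ∧ x ≠ y ↔
      x + y = 1 - c ∧ x * y = (1 - c) ^ 2 - M ∧ x ≠ y := by
  rw [Hmap_eq_self_iff hc]
  constructor
  · rintro ⟨⟨h₁, h₂⟩, hxy⟩
    have hsum : x + y = 1 - c := by
      have : (x - y) * (x + y - (1 - c)) = 0 := by linear_combination h₁ + h₂
      linarith [(mul_eq_zero.mp this).resolve_left (sub_ne_zero.mpr hxy)]
    exact ⟨hsum, by linear_combination (y + 1 - c) * hsum + h₁, hxy⟩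
  · rintro ⟨hsum, hprod, hxy⟩
    exact ⟨⟨by linear_combination hprod - (y + 1 - c) * hsum,
      by linear_combination (x + 1 - c) * hsum - hprod⟩, hxy⟩

theorem add_eq_and_mul_eq_iff {R : Type*} [CommRing R] [IsDomain R] {u v x y : R} :
    x + y = u + v ∧ x * y = u * v ↔ x = u ∧ y = v ∨ x = v ∧ y = u := by
  constructor
  · rintro ⟨hsum, hprod⟩
    have : (x - u) * (x - v) = 0 := by linear_combination x * hsum - hprod
    rcases mul_eq_zero.mp this with h | h
    · exact .inl ⟨sub_eq_zero.mp h, by linear_combination hsum - h⟩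
    · exact .inr ⟨sub_eq_zero.mp h, by linear_combination hsum - h⟩
  · rintro (⟨rfl, rfl⟩ | ⟨rfl, rfl⟩)
    exacts [⟨rfl, rfl⟩, ⟨add_comm x y, mul_comm x y⟩]

theorem exists_ne_add_eq_mul_eq {s P : ℝ} (h : 4 * P < s ^ 2) :
    ∃ u v : ℝ, u ≠ v ∧ u + v = s ∧ u * v = P := by
  let d := Real.sqrt (s ^ 2 - 4 * P)
  have hd : 0 < d := Real.sqrt_pos.mpr (by linarith)
  have hd_sq : d ^ 2 = s ^ 2 - 4 * P := Real.sq_sqrt (by linarith)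
  refine ⟨(s + d) / 2, (s - d) / 2, by linarith, by ring, by linear_combination -hd_sq / 4⟩

/-- The conditions `PF` and `PD(asym)` are exactly `2c < c² + 1 - 4P < -2c` for `P = (1-c)² - M`. -/
theorem trace_sq_lt_four {M c : ℝ} (hc : c < 0)
    (h1 : 3 * (c - 1) ^ 2 < 4 * M) (h2 : 4 * M < (1 - 3 * c) * (3 - c)) :
    (c + (1 - 4 * ((1 - c) ^ 2 - M)) / c) ^ 2 < 4 := by
  set q := c ^ 2 + 1 - 4 * ((1 - c) ^ 2 - M)
  have hq : c + (1 - 4 * ((1 - c) ^ 2 - M)) / c = q / c := by field_simp; ring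
  have hq_lo : 0 < q - 2 * c := by nlinarith
  have hq_hi : q + 2 * c < 0 := by nlinarith
  rw [hq, div_pow, div_lt_iff₀ (sq_pos_of_neg hc)]
  nlinarith [mul_neg_of_pos_of_neg hq_lo hq_hi]

theorem hasEigenvalue_HJac_im_ne_zero_and_norm_eq_one {M c x y : ℝ} (hc : c ≠ 0)
    (hfix : Hmap M c (x, y) = (x, y)) (htr : (c + (1 - 4 * (x * y)) / c) ^ 2 < 4) {μ : ℂ}
    (hμ : hasEigenvalue (HJac M c (x, y)) μ) : μ.im ≠ 0 ∧ ‖μ‖ = 1 := by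
  have hx := ((Hmap_eq_self_iff hc M x y).mp hfix).1
  refine hasEigenvalue_im_ne_zero_and_norm_eq_one (HJac_det hc M _) ?_ hμ
  simpa only [HJac_trace, hx, mul_assoc] using htr

/-- for `c < 0` and `3(c−1)² < 4M < (1−3c)(3−c)` (between the pitchfork
curve `PF` and the curve `PD(asym)`), `H` has exactly two fixed points off the diagonal,
the symmetric couple `(u,v)` and `(v,u)` with `u + v = 1 − c`, `u·v = (1−c)² − M`, `u ≠ v`,
and at each of them the Jacobian matrix has two non-real complex eigenvalues of
modulus `1` (the symmetric couple of fixed points is elliptic). -/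
theorem stmt_18 (M c : ℝ) (hc : c < 0)
    (h1 : 3 * (c - 1) ^ 2 < 4 * M) (h2 : 4 * M < (1 - 3 * c) * (3 - c)) :
    ∃ u v : ℝ, u ≠ v ∧ u + v = 1 - c ∧ u * v = (1 - c) ^ 2 - M ∧
      Hmap M c (u, v) = (u, v) ∧ Hmap M c (v, u) = (v, u) ∧
      {p : ℝ × ℝ | Hmap M c p = p ∧ p.1 ≠ p.2} = {(u, v), (v, u)} ∧
      (∀ μ : ℂ, hasEigenvalue (HJac M c (u, v)) μ →
        μ.im ≠ 0 ∧ ‖μ‖ = 1) ∧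
      (∀ μ : ℂ, hasEigenvalue (HJac M c (v, u)) μ →
        μ.im ≠ 0 ∧ ‖μ‖ = 1) := by
  obtain ⟨u, v, huv, hsum, hprod⟩ :=
    exists_ne_add_eq_mul_eq (s := 1 - c) (P := (1 - c) ^ 2 - M) (by nlinarith)
  have hfix_iff (x y : ℝ) : Hmap M c (x, y) = (x, y) ∧ x ≠ y ↔ x = u ∧ y = v ∨ x = v ∧ y = u := by
    rw [Hmap_eq_self_and_ne_iff hc.ne, ← hprod, ← hsum, ← and_assoc, add_eq_and_mul_eq_iff]
    refine and_iff_left_of_imp ?_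
    rintro (⟨rfl, rfl⟩ | ⟨rfl, rfl⟩)
    exacts [huv, huv.symm]
  have hfix_uv := ((hfix_iff u v).mpr (.inl ⟨rfl, rfl⟩)).1
  have hfix_vu := ((hfix_iff v u).mpr (.inr ⟨rfl, rfl⟩)).1
  have htr := trace_sq_lt_four hc h1 h2
  rw [← hprod] at htr
  refine ⟨u, v, huv, hsum, hprod, hfix_uv, hfix_vu, ?_,
    fun _ => hasEigenvalue_HJac_im_ne_zero_and_norm_eq_one hc.ne hfix_uv htr,
    fun _ => hasEigenvalue_HJac_im_ne_zero_and_norm_eq_one hc.ne hfix_vu (by rwa [mul_comm v])⟩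
  ext ⟨x, y⟩
  simpa only [Set.mem_ofPred_eq, Set.mem_insert_iff, Set.mem_singleton_iff, Prod.mk.injEq]
    using hfix_iff x y
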